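/- arXiv:2305.05492 — 5 statements merged into one kernel-verified Lean document; each statement's English description precedes it below -/
import Mathlib

section
/- Let (X,ϱ) be a complete and separable metric space, let η be a nonnegative finite Borel measure with finite first moment, c > 0, and q, q' ∈ X two distinct points with [q,q'] = {q,q'}. Set μ := η + c·δ_q and ν := η + c·δ_{q'}. Then there is exactly one optimal coupling of μ and ν, namely Π* := c·δ_{(q,q')} + (Id×Id)_# η, i.e., Π* is the unique coupling Π of μ and ν satisfying ∬_{X×X} ϱ(x,y) dΠ(x,y) = d₁(μ,ν); moreover d₁(μ,ν) = c·ϱ(q,q'). -/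
/-! The potential `x ↦ ϱ(x, q')` is 1-Lipschitz and its integrals against `μ` and `ν` differ by
`c ϱ(q, q')`; this bounds every transport cost from below, and the bound is attained by the
coupling that moves the mass `c` from `q` to `q'` and leaves `η` in place. For an optimal coupling
the triangle inequality `ϱ(x, q') ≤ ϱ(x, y) + ϱ(y, q')` is then an almost sure equality, which at
`x = q` puts `y` in `[q, q'] = {q, q'}`. Since only `η{q}` of the mass may stay at `q`, at least `c`
goes from `q` to `q'`; that alone costs `c ϱ(q, q')`, so no other mass moves. -/

open MeasureTheory Set
open scoped ENNReal

noncomputable section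

/-- A coupling of `μ` and `ν` is a measure on `X × X` with marginals `μ` and `ν`. -/
def IsCoupling {X : Type*} [MeasurableSpace X] (μ ν : Measure X)
    (π : Measure (X × X)) : Prop :=
  π.map Prod.fst = μ ∧ π.map Prod.snd = ν

/-- The 1-Wasserstein distance: infimum over couplings of the integral of the distance. -/
noncomputable def W1 {X : Type*} [MeasurableSpace X] [PseudoEMetricSpace X]
    (μ ν : Measure X) : ℝ≥0∞ :=
  ⨅ (π : Measure (X × X)) (_ : IsCoupling μ ν π), ∫⁻ p, edist p.1 p.2 ∂π

/-- `μ` has a finite first moment. -/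
def HasFiniteFirstMoment {X : Type*} [MeasurableSpace X] [PseudoEMetricSpace X]
    (μ : Measure X) : Prop :=
  ∃ x₀ : X, ∫⁻ x, edist x x₀ ∂μ ≠ ⊤

/-- Membership in the 1-Wasserstein space: a Borel probability measure with finite
first moment. -/
def MemW1 {X : Type*} [MeasurableSpace X] [PseudoEMetricSpace X]
    (μ : Measure X) : Prop :=
  IsProbabilityMeasure μ ∧ HasFiniteFirstMoment μ

/-- A unit-speed geodesic in the 1-Wasserstein space, defined on `[a,b]`. -/
def IsUnitSpeedGeodesicOn {X : Type*} [MeasurableSpace X] [PseudoEMetricSpace X]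
    (γ : ℝ → Measure X) (a b : ℝ) : Prop :=
  (∀ t ∈ Icc a b, MemW1 (γ t)) ∧
  ∀ s ∈ Icc a b, ∀ t ∈ Icc a b, W1 (γ s) (γ t) = ENNReal.ofReal |s - t|

/-- The metric segment `[q,q']`. -/
def metricSegment {X : Type*} [PseudoMetricSpace X] (q q' : X) : Set X :=
  {r | dist q r + dist r q' = dist q q'}

/-- The metric `λ`-ratio set `M_λ(μ,ν)`. -/
def ratioSet {X : Type*} [MeasurableSpace X] [PseudoEMetricSpace X]
    (μ ν : Measure X) (lam : ℝ) : Set (Measure X) :=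
  {ξ | MemW1 ξ ∧ W1 μ ξ = ENNReal.ofReal lam * W1 μ ν ∧
       W1 ξ ν = ENNReal.ofReal (1 - lam) * W1 μ ν}

/-- The linear interpolation `t ↦ (1 - t/T) μ + (t/T) ν`. -/
noncomputable def linInterp {X : Type*} [MeasurableSpace X]
    (μ ν : Measure X) (T t : ℝ) : Measure X :=
  ENNReal.ofReal (1 - t / T) • μ + ENNReal.ofReal (t / T) • ν

/-- The relation `q ∼ q'`: any point saturating one of the three triangle
equalities must be `q` or `q'`. -/
def PointRel {X : Type*} [PseudoMetricSpace X] (q q' : X) : Prop :=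
  ∀ r : X,
    (dist q q' = dist q r + dist r q' → r = q ∨ r = q') ∧
    (dist r q = dist r q' + dist q' q → r = q ∨ r = q') ∧
    (dist q' r = dist q' q + dist q r → r = q ∨ r = q')

namespace IsCoupling

variable {X : Type*} [MeasurableSpace X] {μ ν : Measure X} {π : Measure (X × X)}

theorem add {μ' ν' : Measure X} {π' : Measure (X × X)} (h : IsCoupling μ ν π)
    (h' : IsCoupling μ' ν' π') : IsCoupling (μ + μ') (ν + ν') (π + π') :=
  ⟨by rw [Measure.map_add _ _ measurable_fst, h.1, h'.1],
    by rw [Measure.map_add _ _ measurable_snd, h.2, h'.2]⟩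

theorem smul (h : IsCoupling μ ν π) (c : ℝ≥0∞) : IsCoupling (c • μ) (c • ν) (c • π) :=
  ⟨by rw [Measure.map_smul, h.1], by rw [Measure.map_smul, h.2]⟩

theorem lintegral_fst (h : IsCoupling μ ν π) {f : X → ℝ≥0∞} (hf : Measurable f) :
    ∫⁻ p, f p.1 ∂π = ∫⁻ x, f x ∂μ := by
  rw [← h.1, lintegral_map hf measurable_fst]

theorem lintegral_snd (h : IsCoupling μ ν π) {f : X → ℝ≥0∞} (hf : Measurable f) :
    ∫⁻ p, f p.2 ∂π = ∫⁻ x, f x ∂ν := by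
  rw [← h.2, lintegral_map hf measurable_snd]

theorem measure_fst_preimage (h : IsCoupling μ ν π) {s : Set X} (hs : MeasurableSet s) :
    π (Prod.fst ⁻¹' s) = μ s := by
  rw [← h.1, Measure.map_apply measurable_fst hs]

theorem measure_snd_preimage (h : IsCoupling μ ν π) {s : Set X} (hs : MeasurableSet s) :
    π (Prod.snd ⁻¹' s) = ν s := by
  rw [← h.2, Measure.map_apply measurable_snd hs]

end IsCoupling

theorem isCoupling_dirac {X : Type*} [MeasurableSpace X] (x y : X) :
    IsCoupling (Measure.dirac x) (Measure.dirac y) (Measure.dirac (x, y)) :=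
  ⟨Measure.map_dirac' measurable_fst _, Measure.map_dirac' measurable_snd _⟩

theorem isCoupling_map_diag {X : Type*} [MeasurableSpace X] (η : Measure X) :
    IsCoupling η η (η.map fun x => (x, x)) := by
  have hdiag : Measurable fun x : X => (x, x) := by fun_prop
  exact ⟨by rw [Measure.map_map measurable_fst hdiag]; exact Measure.map_id,
    by rw [Measure.map_map measurable_snd hdiag]; exact Measure.map_id⟩

theorem mem_metricSegment_iff_edist {X : Type*} [PseudoMetricSpace X] {q q' r : X} :
    r ∈ metricSegment q q' ↔ edist q r + edist r q' = edist q q' := by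
  simp only [metricSegment, mem_ofPred_eq, edist_dist,
    ← ENNReal.ofReal_add dist_nonneg dist_nonneg,
    ENNReal.ofReal_eq_ofReal_iff (add_nonneg dist_nonneg dist_nonneg) dist_nonneg]

theorem HasFiniteFirstMoment.lintegral_edist_ne_top {X : Type*} [MeasurableSpace X]
    [PseudoMetricSpace X] {μ : Measure X} [IsFiniteMeasure μ] (h : HasFiniteFirstMoment μ)
    (z : X) : ∫⁻ x, edist x z ∂μ ≠ ⊤ := by
  obtain ⟨x₀, hx₀⟩ := h
  refine ne_top_of_le_ne_top ?_ (lintegral_mono fun x => edist_triangle x x₀ z)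
  rw [lintegral_add_right _ measurable_const, lintegral_const]
  exact ENNReal.add_ne_top.2 ⟨hx₀, ENNReal.mul_ne_top (edist_ne_top _ _) (measure_ne_top μ _)⟩

section Kantorovich

variable {X : Type*} [MeasurableSpace X] [PseudoEMetricSpace X] [OpensMeasurableSpace X]
  [SecondCountableTopology X] {μ ν : Measure X} {π : Measure (X × X)}

theorem IsCoupling.lintegral_edist_le (h : IsCoupling μ ν π) (z : X) :
    ∫⁻ x, edist x z ∂μ ≤ ∫⁻ p, edist p.1 p.2 ∂π + ∫⁻ y, edist y z ∂ν := by
  rw [← h.lintegral_fst measurable_edist_left, ← h.lintegral_snd measurable_edist_left,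
    ← lintegral_add_left measurable_edist]
  exact lintegral_mono fun p => edist_triangle _ _ _

theorem IsCoupling.ae_edist_eq_add_of_lintegral_eq (h : IsCoupling μ ν π) (z : X)
    (hfin : ∫⁻ x, edist x z ∂μ ≠ ⊤)
    (heq : ∫⁻ x, edist x z ∂μ = ∫⁻ p, edist p.1 p.2 ∂π + ∫⁻ y, edist y z ∂ν) :
    ∀ᵐ p ∂π, edist p.1 z = edist p.1 p.2 + edist p.2 z := by
  refine ae_eq_of_ae_le_of_lintegral_le (ae_of_all _ fun p => edist_triangle _ _ _)
    (by rwa [h.lintegral_fst measurable_edist_left]) ?_ ?_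
  · exact (by fun_prop : Measurable fun p : X × X => edist p.1 p.2 + edist p.2 z).aemeasurable
  · rw [lintegral_add_left measurable_edist, h.lintegral_fst measurable_edist_left,
      h.lintegral_snd measurable_edist_left, heq]

end Kantorovich

theorem eq_map_diag_of_lintegral_edist_eq_zero {X : Type*} [MeasurableSpace X]
    [EMetricSpace X] [OpensMeasurableSpace X] [SecondCountableTopology X]
    {ρ : Measure (X × X)} (h : ∫⁻ p, edist p.1 p.2 ∂ρ = 0) :
    ρ = (ρ.map Prod.fst).map fun x => (x, x) := by
  have hdiag : ∀ᵐ p ∂ρ, p = (p.1, p.1) :=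
    ((lintegral_eq_zero_iff measurable_edist).1 h).mono fun p hp =>
      Prod.ext rfl (edist_eq_zero.1 hp).symm
  rw [Measure.map_map (by fun_prop) measurable_fst]
  exact Measure.map_id.symm.trans (Measure.map_congr hdiag)

theorem lintegral_add_smul_dirac {X : Type*} [MeasurableSpace X] (η : Measure X) (C : ℝ≥0∞)
    (q : X) {f : X → ℝ≥0∞} (hf : Measurable f) :
    ∫⁻ x, f x ∂(η + C • Measure.dirac q) = ∫⁻ x, f x ∂η + C * f q := by
  rw [lintegral_add_measure, lintegral_smul_measure, lintegral_dirac' _ hf, smul_eq_mul]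

theorem isCoupling_add_smul_dirac {X : Type*} [MeasurableSpace X] (η : Measure X) (C : ℝ≥0∞)
    (q q' : X) :
    IsCoupling (η + C • Measure.dirac q) (η + C • Measure.dirac q')
      (C • Measure.dirac (q, q') + η.map fun x => (x, x)) := by
  rw [add_comm η, add_comm η]
  exact ((isCoupling_dirac q q').smul C).add (isCoupling_map_diag η)

theorem lintegral_edist_smul_dirac_add_map_diag {X : Type*} [MeasurableSpace X]
    [PseudoEMetricSpace X] [OpensMeasurableSpace X] [SecondCountableTopology X] (η : Measure X)
    (C : ℝ≥0∞) (q q' : X) :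
    ∫⁻ p, edist p.1 p.2 ∂(C • Measure.dirac (q, q') + η.map fun x => (x, x)) =
      C * edist q q' := by
  rw [lintegral_add_measure, lintegral_smul_measure, lintegral_dirac' _ measurable_edist,
    lintegral_map measurable_edist (by fun_prop)]
  simp

section TwoPointTransport

variable {X : Type*} [MetricSpace X] [MeasurableSpace X] [BorelSpace X]
  [SecondCountableTopology X] {η : Measure X} {C : ℝ≥0∞} {q q' : X} {π : Measure (X × X)}

theorem IsCoupling.mul_edist_le_lintegral_edist
    (hπ : IsCoupling (η + C • Measure.dirac q) (η + C • Measure.dirac q') π)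
    (hη : ∫⁻ x, edist x q' ∂η ≠ ⊤) :
    C * edist q q' ≤ ∫⁻ p, edist p.1 p.2 ∂π := by
  have h := hπ.lintegral_edist_le q'
  rw [lintegral_add_smul_dirac _ _ _ measurable_edist_left,
    lintegral_add_smul_dirac _ _ _ measurable_edist_left, edist_self, mul_zero, add_zero,
    add_comm (∫⁻ p, edist p.1 p.2 ∂π)] at h
  exact ENNReal.le_of_add_le_add_left hη h

theorem IsCoupling.ae_mem_metricSegment_of_fst_eq
    (hπ : IsCoupling (η + C • Measure.dirac q) (η + C • Measure.dirac q') π)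
    (hη : ∫⁻ x, edist x q' ∂η ≠ ⊤) (hC : C ≠ ⊤)
    (hcost : ∫⁻ p, edist p.1 p.2 ∂π = C * edist q q') :
    ∀ᵐ p ∂π, p.1 = q → p.2 ∈ metricSegment q q' := by
  have hμ : ∫⁻ x, edist x q' ∂(η + C • Measure.dirac q) =
      ∫⁻ x, edist x q' ∂η + C * edist q q' :=
    lintegral_add_smul_dirac _ _ _ measurable_edist_left
  have hν : ∫⁻ x, edist x q' ∂(η + C • Measure.dirac q') = ∫⁻ x, edist x q' ∂η := by
    rw [lintegral_add_smul_dirac _ _ _ measurable_edist_left, edist_self, mul_zero, add_zero]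
  have htight := hπ.ae_edist_eq_add_of_lintegral_eq q'
    (by rw [hμ]; exact ENNReal.add_ne_top.2 ⟨hη, ENNReal.mul_ne_top hC (edist_ne_top _ _)⟩)
    (by rw [hμ, hν, hcost, add_comm])
  filter_upwards [htight] with p hp hpq
  rw [hpq] at hp
  exact mem_metricSegment_iff_edist.2 hp.symm

theorem IsCoupling.le_measure_singleton_of_lintegral_edist_eq [IsFiniteMeasure η]
    (hπ : IsCoupling (η + C • Measure.dirac q) (η + C • Measure.dirac q') π)
    (hη : ∫⁻ x, edist x q' ∂η ≠ ⊤) (hC : C ≠ ⊤)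
    (hcost : ∫⁻ p, edist p.1 p.2 ∂π = C * edist q q')
    (hseg : metricSegment q q' ⊆ {q, q'}) (hne : q ≠ q') :
    C ≤ π {(q, q')} := by
  have hfiber : Prod.fst ⁻¹' {q} ≤ᵐ[π] ({(q, q)} ∪ {(q, q')} : Set (X × X)) := by
    filter_upwards [hπ.ae_mem_metricSegment_of_fst_eq hη hC hcost] with p hp (hpq : p.1 = q)
    rcases hseg (hp hpq) with h | h
    · exact Or.inl (Prod.ext hpq h)
    · exact Or.inr (Prod.ext hpq h)
  have hstay : π {(q, q)} ≤ η {q} :=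
    calc π {(q, q)} ≤ π (Prod.snd ⁻¹' {q}) := measure_mono (by simp)
      _ = η {q} := by
        rw [hπ.measure_snd_preimage (measurableSet_singleton q)]
        simp [hne.symm]
  have hmass : η {q} + C ≤ η {q} + π {(q, q')} :=
    calc η {q} + C = π (Prod.fst ⁻¹' {q}) := by
          rw [hπ.measure_fst_preimage (measurableSet_singleton q)]
          simp
      _ ≤ π {(q, q)} + π {(q, q')} := (measure_mono_ae hfiber).trans (measure_union_le _ _)
      _ ≤ η {q} + π {(q, q')} := by gcongr
  exact ENNReal.le_of_add_le_add_left (measure_ne_top η _) hmass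

theorem IsCoupling.eq_of_lintegral_edist_eq [IsFiniteMeasure η]
    (hπ : IsCoupling (η + C • Measure.dirac q) (η + C • Measure.dirac q') π)
    (hη : ∫⁻ x, edist x q' ∂η ≠ ⊤) (hC : C ≠ ⊤)
    (hcost : ∫⁻ p, edist p.1 p.2 ∂π = C * edist q q')
    (hseg : metricSegment q q' ⊆ {q, q'}) (hne : q ≠ q') :
    π = C • Measure.dirac (q, q') + η.map fun x => (x, x) := by
  set a : X × X := (q, q')
  have hsplit : edist q q' * π {a} + ∫⁻ p in {a}ᶜ, edist p.1 p.2 ∂π = C * edist q q' := by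
    have h := lintegral_add_compl (μ := π) (fun p : X × X => edist p.1 p.2)
      (measurableSet_singleton a)
    rwa [lintegral_singleton, hcost] at h
  have hCa := hπ.le_measure_singleton_of_lintegral_edist_eq hη hC hcost hseg hne
  have hrest : ∫⁻ p in {a}ᶜ, edist p.1 p.2 ∂π = 0 := by
    refine nonpos_iff_eq_zero.1 (ENNReal.le_of_add_le_add_left
      (ENNReal.mul_ne_top hC (edist_ne_top q q')) ?_)
    calc C * edist q q' + ∫⁻ p in {a}ᶜ, edist p.1 p.2 ∂π
        ≤ edist q q' * π {a} + ∫⁻ p in {a}ᶜ, edist p.1 p.2 ∂π := by rw [mul_comm]; gcongr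
      _ = C * edist q q' + 0 := by rw [hsplit, add_zero]
  have hatom : π {a} = C := by
    rw [hrest, add_zero, mul_comm C] at hsplit
    exact (ENNReal.mul_right_inj ((edist_pos.2 hne).ne') (edist_ne_top q q')).1 hsplit
  have hdecomp : π = C • Measure.dirac a + π.restrict {a}ᶜ := by
    rw [← hatom, ← Measure.restrict_singleton,
      Measure.restrict_add_restrict_compl (measurableSet_singleton a)]
  have hmarg : (π.restrict {a}ᶜ).map Prod.fst = η := by
    have := (Measure.dirac q).smul_finite hC
    have h := hπ.1
    rw [hdecomp, Measure.map_add _ _ measurable_fst, Measure.map_smul,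
      Measure.map_dirac' measurable_fst, add_comm η] at h
    exact (Measure.add_right_inj _ _ _).1 h
  rw [hdecomp, eq_map_diag_of_lintegral_edist_eq_zero hrest, hmarg]

end TwoPointTransport

theorem stmt3_general {X : Type*} [MetricSpace X]
    [TopologicalSpace.SeparableSpace X] [MeasurableSpace X] [BorelSpace X]
    (η : Measure X) [IsFiniteMeasure η] (hη : HasFiniteFirstMoment η)
    (c : ℝ) (q q' : X) (hne : q ≠ q')
    (hseg : metricSegment q q' = {q, q'})
    (μ ν : Measure X)
    (hμdef : μ = η + ENNReal.ofReal c • Measure.dirac q)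
    (hνdef : ν = η + ENNReal.ofReal c • Measure.dirac q') :
    W1 μ ν = ENNReal.ofReal c * edist q q' ∧
    IsCoupling μ ν
      (ENNReal.ofReal c • Measure.dirac (q, q') + η.map (fun x => (x, x))) ∧
    (∫⁻ p, edist p.1 p.2
        ∂(ENNReal.ofReal c • Measure.dirac (q, q') + η.map (fun x => (x, x))))
      = W1 μ ν ∧
    ∀ π : Measure (X × X), IsCoupling μ ν π →
      (∫⁻ p, edist p.1 p.2 ∂π) = W1 μ ν →
      π = ENNReal.ofReal c • Measure.dirac (q, q') + η.map (fun x => (x, x)) := by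
  subst hμdef hνdef
  have hmoment := hη.lintegral_edist_ne_top q'
  have hcpl := isCoupling_add_smul_dirac η (ENNReal.ofReal c) q q'
  have hcost := lintegral_edist_smul_dirac_add_map_diag η (ENNReal.ofReal c) q q'
  have hW1 : W1 _ _ = ENNReal.ofReal c * edist q q' :=
    le_antisymm ((iInf₂_le _ hcpl).trans_eq hcost)
      (le_iInf₂ fun π hπ => hπ.mul_edist_le_lintegral_edist hmoment)
  refine ⟨hW1, hcpl, hcost.trans hW1.symm, fun π hπ hπcost => ?_⟩
  exact hπ.eq_of_lintegral_edist_eq hmoment ENNReal.ofReal_ne_top (hπcost.trans hW1)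
    hseg.subset hne

theorem stmt3 {X : Type*} [MetricSpace X] [CompleteSpace X]
    [TopologicalSpace.SeparableSpace X] [MeasurableSpace X] [BorelSpace X]
    (η : Measure X) [IsFiniteMeasure η] (hη : HasFiniteFirstMoment η)
    (c : ℝ) (hc : 0 < c) (q q' : X) (hne : q ≠ q')
    (hseg : metricSegment q q' = {q, q'})
    (μ ν : Measure X)
    (hμdef : μ = η + ENNReal.ofReal c • Measure.dirac q)
    (hνdef : ν = η + ENNReal.ofReal c • Measure.dirac q') :
    W1 μ ν = ENNReal.ofReal c * edist q q' ∧
    IsCoupling μ ν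
      (ENNReal.ofReal c • Measure.dirac (q, q') + η.map (fun x => (x, x))) ∧
    (∫⁻ p, edist p.1 p.2
        ∂(ENNReal.ofReal c • Measure.dirac (q, q') + η.map (fun x => (x, x))))
      = W1 μ ν ∧
    ∀ π : Measure (X × X), IsCoupling μ ν π →
      (∫⁻ p, edist p.1 p.2 ∂π) = W1 μ ν →
      π = ENNReal.ofReal c • Measure.dirac (q, q') + η.map (fun x => (x, x)) :=
  stmt3_general η hη c q q' hne hseg μ ν hμdef hνdef
end
end

section
/- Let (X,ϱ) be a complete and separable metric space with at least two points, let q, q' ∈ X satisfy q ∼ q', and let ξ be a Borel probability measure on X with finite first moment such that d₁(ξ, δ_{q'}) = d₁(ξ, δ_q) + ϱ(q,q'). Then the support of ξ is contained in {q, q'}. -/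
open MeasureTheory Set
open scoped ENNReal

noncomputable section

/-- The (topological) support of a measure: the set of points all of whose open
neighbourhoods have positive measure. -/
def measSupport {X : Type*} [TopologicalSpace X] [MeasurableSpace X]
    (μ : Measure X) : Set X :=
  {x | ∀ U : Set X, IsOpen U → x ∈ U → 0 < μ U}

/-
Against a Dirac mass the only coupling is `ξ ⊗ δ_x`, so `W₁(ξ, δ_x) = ∫ ϱ(y, x) dξ(y)`.
The hypothesis then says `∫ ϱ(y, q') dξ = ∫ (ϱ(y, q) + ϱ(q, q')) dξ`, while the integrands
satisfy `≤` pointwise by the triangle inequality; with a finite first moment this forces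
equality `ξ`-almost everywhere. Equality holds on a closed set, which therefore contains the
support, and by `q ∼ q'` the only points `y` with `ϱ(q', y) = ϱ(q', q) + ϱ(q, y)` are `q`
and `q'`.
-/
section Wasserstein

variable {X : Type*} [MeasurableSpace X]

lemma W1_dirac_right [EMetricSpace X] [OpensMeasurableSpace X]
    (ξ : Measure X) [IsProbabilityMeasure ξ] (x : X) :
    W1 ξ (Measure.dirac x) = ∫⁻ y, edist y x ∂ξ := by
  have hpair : Measurable fun y : X => (y, x) := measurable_id.prodMk measurable_const
  apply le_antisymm
  · have hcoupling : IsCoupling ξ (Measure.dirac x) (ξ.map fun y => (y, x)) := by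
      refine ⟨?_, ?_⟩
      · rw [Measure.map_map measurable_fst hpair]
        exact Measure.map_id
      · rw [Measure.map_map measurable_snd hpair]
        simp [Function.comp_def, Measure.map_const]
    exact (iInf₂_le _ hcoupling).trans (lintegral_map_le _ _)
  · refine le_iInf₂ fun π hπ => le_of_eq ?_
    have hsnd : ∀ᵐ p ∂π, p.2 = x := by
      have h : ∀ᵐ y ∂π.map Prod.snd, y = x := by
        rw [hπ.2, ae_dirac_eq]
        exact Filter.eventually_pure.2 rfl
      exact ae_of_ae_map measurable_snd.aemeasurable h
    calc ∫⁻ y, edist y x ∂ξ = ∫⁻ y, edist y x ∂(π.map Prod.fst) := by rw [hπ.1]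
      _ = ∫⁻ p, edist p.1 x ∂π := lintegral_map measurable_edist_left measurable_fst
      _ = ∫⁻ p, edist p.1 p.2 ∂π :=
          lintegral_congr_ae (hsnd.mono fun p hp => congrArg (edist p.1) hp.symm)

variable [PseudoMetricSpace X]

lemma HasFiniteFirstMoment.lintegral_edist_ne_top_s9 {ξ : Measure X} [IsFiniteMeasure ξ]
    (hξ : HasFiniteFirstMoment ξ) (x : X) : ∫⁻ y, edist y x ∂ξ ≠ ⊤ := by
  obtain ⟨x₀, hx₀⟩ := hξ
  refine ne_top_of_le_ne_top
    (ENNReal.add_ne_top.2 ⟨hx₀, ENNReal.mul_ne_top (edist_ne_top x₀ x) (measure_ne_top ξ univ)⟩) ?_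
  calc ∫⁻ y, edist y x ∂ξ ≤ ∫⁻ y, (edist y x₀ + edist x₀ x) ∂ξ :=
        lintegral_mono fun y => edist_triangle _ _ _
    _ = ∫⁻ y, edist y x₀ ∂ξ + edist x₀ x * ξ univ := by
        rw [lintegral_add_right _ measurable_const, lintegral_const]

lemma ae_edist_eq_add_of_lintegral_eq [OpensMeasurableSpace X] {ξ : Measure X}
    [IsProbabilityMeasure ξ] (hξ : HasFiniteFirstMoment ξ) {q q' : X}
    (h : ∫⁻ y, edist y q' ∂ξ = ∫⁻ y, edist y q ∂ξ + edist q q') :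
    ∀ᵐ y ∂ξ, edist y q' = edist y q + edist q q' := by
  have hsum : ∫⁻ y, (edist y q + edist q q') ∂ξ = ∫⁻ y, edist y q ∂ξ + edist q q' := by
    rw [lintegral_add_right _ measurable_const, lintegral_const, measure_univ, mul_one]
  refine ae_eq_of_ae_le_of_lintegral_le (ae_of_all _ fun y => edist_triangle _ _ _) ?_
    (measurable_edist_left.add_const _).aemeasurable (by rw [hsum, h])
  rw [h]
  exact ENNReal.add_ne_top.2 ⟨hξ.lintegral_edist_ne_top_s9 q, edist_ne_top q q'⟩

end Wasserstein

lemma measSupport_eq_support {X : Type*} [TopologicalSpace X] [MeasurableSpace X]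
    (μ : Measure X) : measSupport μ = μ.support := by
  rw [Measure.support_eq_forall_isOpen]
  ext x
  exact forall_congr' fun U => ⟨fun h hx hU => h hU hx, fun h hU hx => h hx hU⟩

lemma PointRel.eq_or_eq_of_edist_eq_add {X : Type*} [PseudoMetricSpace X] {q q' r : X}
    (h : PointRel q q') (hr : edist r q' = edist r q + edist q q') : r = q ∨ r = q' := by
  refine (h r).2.2 ?_
  rw [edist_dist, edist_dist, edist_dist, ← ENNReal.ofReal_add dist_nonneg dist_nonneg,
    ENNReal.ofReal_eq_ofReal_iff dist_nonneg (by positivity)] at hr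
  rw [dist_comm q' r, dist_comm q' q, dist_comm q r, hr, add_comm]

theorem stmt9_general {X : Type*} [MetricSpace X]
    [MeasurableSpace X] [BorelSpace X]
    (q q' : X) (hqq' : PointRel q q')
    (ξ : Measure X) [IsProbabilityMeasure ξ] (hξm : HasFiniteFirstMoment ξ)
    (heq : W1 ξ (Measure.dirac q') = W1 ξ (Measure.dirac q) + edist q q') :
    measSupport ξ ⊆ {q, q'} := by
  rw [W1_dirac_right, W1_dirac_right] at heq
  have hclosed : IsClosed {y : X | edist y q' = edist y q + edist q q'} :=
    isClosed_eq (continuous_id.edist continuous_const)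
      ((continuous_id.edist continuous_const).add continuous_const)
  rw [measSupport_eq_support]
  exact (Measure.support_subset_of_isClosed hclosed
    (ae_edist_eq_add_of_lintegral_eq hξm heq)).trans fun r => hqq'.eq_or_eq_of_edist_eq_add

theorem stmt9 {X : Type*} [MetricSpace X] [CompleteSpace X]
    [TopologicalSpace.SeparableSpace X] [Nontrivial X]
    [MeasurableSpace X] [BorelSpace X]
    (q q' : X) (hqq' : PointRel q q')
    (ξ : Measure X) [IsProbabilityMeasure ξ] (hξm : HasFiniteFirstMoment ξ)
    (heq : W1 ξ (Measure.dirac q') = W1 ξ (Measure.dirac q) + edist q q') :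
    measSupport ξ ⊆ {q, q'} :=
  stmt9_general q q' hqq' ξ hξm heq
end
end

section
/- Let ℍⁿ be the Heisenberg group, identified with ℝ^{2n+1} as a set. For r > 0 define the Hebisch–Sikora function N_{HS}(q) := inf{ t > 0 : δ_{1/t}(q) ∈ B(0,r) }, where B(0,r) is the Euclidean ball of radius r centered at the origin of ℝ^{2n+1}. Then there exists r₀ > 0 such that for all 0 < r < r₀: (a) N_{HS} is a homogeneous norm on ℍⁿ, and (b) N_{HS} is horizontally strictly convex; moreover, for q₁, q₂ ≠ 0, equality N_{HS}(q₁·q₂) = N_{HS}(q₁) + N_{HS}(q₂) holds if and only if q₁ = ((s₁ w), 0) and q₂ = ((s₂ w), 0) for some w ∈ ℝ^{2n} and s₁, s₂ > 0. -/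
open MeasureTheory Set
open scoped ENNReal

noncomputable section

/-- The underlying set of the Heisenberg group `ℍⁿ = ℝⁿ × ℝⁿ × ℝ`. -/
abbrev Heis (n : ℕ) : Type := (Fin n → ℝ) × (Fin n → ℝ) × ℝ

/-- The Heisenberg group law
`(x,y,z)·(x',y',z') = (x+x', y+y', z+z'+2∑ (x'ᵢ yᵢ - xᵢ y'ᵢ))`. -/
def hMul {n : ℕ} (p q : Heis n) : Heis n :=
  (p.1 + q.1, p.2.1 + q.2.1,
    p.2.2 + q.2.2 + 2 * ∑ i, (q.1 i * p.2.1 i - p.1 i * q.2.1 i))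

/-- The group inverse in the Heisenberg group. -/
def hInv {n : ℕ} (p : Heis n) : Heis n := (-p.1, -p.2.1, -p.2.2)

/-- The non-isotropic dilation `δ_λ(x,y,z) = (λx, λy, λ²z)`. -/
def hDil {n : ℕ} (lam : ℝ) (p : Heis n) : Heis n :=
  (lam • p.1, lam • p.2.1, lam ^ 2 * p.2.2)

/-- The Korányi norm `‖(x,y,z)‖_K = ((∑ (xᵢ² + yᵢ²))² + z²)^{1/4}`. -/
noncomputable def koranyiNorm {n : ℕ} (p : Heis n) : ℝ :=
  ((∑ i, ((p.1 i) ^ 2 + (p.2.1 i) ^ 2)) ^ 2 + (p.2.2) ^ 2) ^ ((1 : ℝ) / 4)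

/-- The Heisenberg–Korányi distance `d_K(q,q') = ‖q⁻¹·q'‖_K`. -/
noncomputable def dK {n : ℕ} (p q : Heis n) : ℝ := koranyiNorm (hMul (hInv p) q)

/-- A homogeneous norm on the Heisenberg group. -/
def IsHomNorm {n : ℕ} (N : Heis n → ℝ) : Prop :=
  (∀ q, 0 ≤ N q) ∧ (∀ q, N q = 0 ↔ q = 0) ∧ (∀ q, N (hInv q) = N q) ∧
  (∀ q q', N (hMul q q') ≤ N q + N q') ∧
  (∀ lam : ℝ, 0 < lam → ∀ q, N (hDil lam q) = lam * N q)

/-- A norm on `ℍⁿ` is horizontally strictly convex if the triangle inequality is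
saturated only by points lying on a common horizontal line through the origin. -/
def IsHSC {n : ℕ} (N : Heis n → ℝ) : Prop :=
  ∀ q q' : Heis n, q ≠ 0 → q' ≠ 0 → N (hMul q q') = N q + N q' →
    ∃ (w : (Fin n → ℝ) × (Fin n → ℝ)) (s s' : ℝ),
      q = (s • w.1, s • w.2, 0) ∧ q' = (s' • w.1, s' • w.2, 0)

/-- The Euclidean norm on the underlying set `ℝ^{2n+1}` of `ℍⁿ`. -/
noncomputable def eNormH {n : ℕ} (p : Heis n) : ℝ :=
  Real.sqrt ((∑ i, (p.1 i) ^ 2) + (∑ i, (p.2.1 i) ^ 2) + (p.2.2) ^ 2)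

/-- The Hebisch–Sikora function `N_{HS}(q) = inf {t > 0 : δ_{1/t}(q) ∈ B(0,r)}`. -/
noncomputable def NHS {n : ℕ} (r : ℝ) (q : Heis n) : ℝ :=
  sInf {t : ℝ | 0 < t ∧ eNormH (hDil (1 / t) q) < r}

/-!
Write the horizontal part `(x, y)` of a point as `a = x + iy ∈ ℂⁿ`; the vertical term of the
group law is then `2 im ⟪b, a⟫`, and `δ_c` acts by `(a, z) ↦ (c a, c² z)`.

`N_HS(q)` is the positive root `T` of `r² T⁴ = ‖a‖² T² + z²`, so `δ_{1/N(q)} q` lies on the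
Euclidean sphere of radius `r`. Given `p, q` with `s = N(p)`, `t = N(q)`, put `p̂ = δ_{1/s} p`,
`q̂ = δ_{1/t} q`, `λ = s/(s+t)`, `μ = t/(s+t)`; then `δ_{1/(s+t)}(pq) = δ_λ p̂ · δ_μ q̂`, and the
triangle inequality says that this point stays in the closed ball. Writing `p̂ = (a, z)`,
`q̂ = (b, z')`, `ω = im ⟪b, a⟫`, its squared norm falls short of `r²` by
`λ²μ²(z-z')² + 2λ³μ(z-ω)² + 2λμ³(z'-ω)² + 2λμ(r² - re ⟪a, b⟫ - ω²)`,
and the last bracket is nonnegative because `re ⟪a, b⟫² + ω² ≤ ‖a‖²‖b‖² ≤ r⁴` and `2r² ≤ 1`.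
If `2r² < 1`, equality forces `z = z' = ω = 0` and `re ⟪a, b⟫ = ‖a‖‖b‖ = r²`, so `p̂ = q̂` is
horizontal.
-/

open scoped InnerProductSpace

section InnerProductSpace

theorem add_sq_le_of_sq_add_sq_le {x y c : ℝ} (hc₀ : 0 ≤ c) (hc : 2 * c ≤ 1)
    (h : x ^ 2 + y ^ 2 ≤ c ^ 2) : x + y ^ 2 ≤ c := by
  have hy : y ^ 2 ≤ c := by nlinarith [sq_nonneg x]
  have hx : x ^ 2 ≤ (c - y ^ 2) ^ 2 := by nlinarith [sq_nonneg y]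
  linarith [le_of_sq_le_sq hx (sub_nonneg.2 hy)]

theorem eq_zero_of_sq_add_sq_le_of_add_sq_eq {x y c : ℝ} (hc : 2 * c < 1)
    (h : x ^ 2 + y ^ 2 ≤ c ^ 2) (heq : x + y ^ 2 = c) : y = 0 := by
  have hx : x = c - y ^ 2 := by linarith
  subst hx
  have : y ^ 2 * (1 - 2 * c + y ^ 2) ≤ 0 := by nlinarith
  have : y ^ 2 ≤ 0 := by nlinarith [sq_nonneg y]
  exact pow_eq_zero_iff two_ne_zero |>.1 (le_antisymm this (sq_nonneg y))

variable {E : Type*} [NormedAddCommGroup E] [InnerProductSpace ℂ E]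

theorem sq_sub_norm_smul_add_smul_sq {a b : E} {z z' ω r l m : ℝ}
    (ha : ‖a‖ ^ 2 + z ^ 2 = r ^ 2) (hb : ‖b‖ ^ 2 + z' ^ 2 = r ^ 2) (hlm : l + m = 1) :
    r ^ 2 - (‖l • a + m • b‖ ^ 2 + (l ^ 2 * z + m ^ 2 * z' + 2 * l * m * ω) ^ 2) =
      l ^ 2 * m ^ 2 * (z - z') ^ 2 + 2 * l ^ 3 * m * (z - ω) ^ 2 + 2 * l * m ^ 3 * (z' - ω) ^ 2
        + 2 * l * m * (r ^ 2 - (⟪a, b⟫_ℂ).re - ω ^ 2) := by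
  have hre : (⟪l • a, m • b⟫_ℂ).re = l * m * (⟪a, b⟫_ℂ).re := by
    rw [RCLike.real_smul_eq_coe_smul (K := ℂ), RCLike.real_smul_eq_coe_smul (K := ℂ),
      inner_smul_real_left, inner_smul_real_right, Complex.real_smul, Complex.real_smul,
      Complex.re_ofReal_mul, Complex.re_ofReal_mul]
    ring
  rw [norm_add_sq (𝕜 := ℂ), norm_smul, norm_smul, mul_pow, mul_pow, Real.norm_eq_abs,
    Real.norm_eq_abs, sq_abs, sq_abs]
  obtain rfl : m = 1 - l := by linarith
  linear_combination (-l ^ 2) * ha - (1 - l) ^ 2 * hb - 2 * hre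

theorem re_inner_sq_add_im_inner_sq_le (a b : E) :
    (⟪a, b⟫_ℂ).re ^ 2 + (⟪b, a⟫_ℂ).im ^ 2 ≤ ‖a‖ ^ 2 * ‖b‖ ^ 2 := by
  have h : ‖⟪a, b⟫_ℂ‖ ^ 2 ≤ (‖a‖ * ‖b‖) ^ 2 :=
    pow_le_pow_left₀ (norm_nonneg _) (norm_inner_le_norm a b) 2
  rw [← inner_conj_symm b a, Complex.conj_im, neg_sq]
  rw [Complex.sq_norm, Complex.normSq_apply, mul_pow] at h
  simpa [sq] using h

section Core

variable {a b : E} {z z' r l m : ℝ}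

theorem re_inner_sq_add_im_inner_sq_le_of_sq_eq (ha : ‖a‖ ^ 2 + z ^ 2 = r ^ 2)
    (hb : ‖b‖ ^ 2 + z' ^ 2 = r ^ 2) : (⟪a, b⟫_ℂ).re ^ 2 + (⟪b, a⟫_ℂ).im ^ 2 ≤ (r ^ 2) ^ 2 :=
  (re_inner_sq_add_im_inner_sq_le a b).trans <| by
    rw [sq (r ^ 2)]
    exact mul_le_mul (by nlinarith) (by nlinarith) (sq_nonneg _) (sq_nonneg _)

theorem norm_smul_add_smul_sq_add_sq_le (hr : 2 * r ^ 2 ≤ 1)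
    (ha : ‖a‖ ^ 2 + z ^ 2 = r ^ 2) (hb : ‖b‖ ^ 2 + z' ^ 2 = r ^ 2)
    (hl : 0 ≤ l) (hm : 0 ≤ m) (hlm : l + m = 1) :
    ‖l • a + m • b‖ ^ 2 + (l ^ 2 * z + m ^ 2 * z' + 2 * l * m * (⟪b, a⟫_ℂ).im) ^ 2 ≤ r ^ 2 := by
  have hcs := re_inner_sq_add_im_inner_sq_le_of_sq_eq ha hb
  have hslack := add_sq_le_of_sq_add_sq_le (sq_nonneg r) hr hcs
  set ω := (⟪b, a⟫_ℂ).im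
  have hid := sq_sub_norm_smul_add_smul_sq (ω := ω) ha hb hlm
  have : 0 ≤ l ^ 2 * m ^ 2 * (z - z') ^ 2 + 2 * l ^ 3 * m * (z - ω) ^ 2
      + 2 * l * m ^ 3 * (z' - ω) ^ 2 := by positivity
  have : 0 ≤ 2 * l * m * (r ^ 2 - (⟪a, b⟫_ℂ).re - ω ^ 2) :=
    mul_nonneg (by positivity) (by linarith)
  linarith

theorem eq_of_norm_smul_add_smul_sq_add_sq_eq (hr : 2 * r ^ 2 < 1)
    (ha : ‖a‖ ^ 2 + z ^ 2 = r ^ 2) (hb : ‖b‖ ^ 2 + z' ^ 2 = r ^ 2)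
    (hl : 0 < l) (hm : 0 < m) (hlm : l + m = 1)
    (h : ‖l • a + m • b‖ ^ 2 + (l ^ 2 * z + m ^ 2 * z' + 2 * l * m * (⟪b, a⟫_ℂ).im) ^ 2 = r ^ 2) :
    a = b ∧ z = 0 ∧ z' = 0 := by
  have hcs := re_inner_sq_add_im_inner_sq_le_of_sq_eq ha hb
  have hslack := add_sq_le_of_sq_add_sq_le (sq_nonneg r) hr.le hcs
  set ω := (⟪b, a⟫_ℂ).im
  have hid := sq_sub_norm_smul_add_smul_sq (ω := ω) ha hb hlm
  rw [h, sub_self] at hid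
  -- every summand of the slack is nonnegative, so each one vanishes
  have t₁ : 0 ≤ l ^ 2 * m ^ 2 * (z - z') ^ 2 := by positivity
  have t₂ : 0 ≤ 2 * l ^ 3 * m * (z - ω) ^ 2 := by positivity
  have t₃ : 0 ≤ 2 * l * m ^ 3 * (z' - ω) ^ 2 := by positivity
  have t₄ : 0 ≤ 2 * l * m * (r ^ 2 - (⟪a, b⟫_ℂ).re - ω ^ 2) :=
    mul_nonneg (by positivity) (by linarith)
  have hz : z = ω := by
    have : 2 * l ^ 3 * m * (z - ω) ^ 2 = 0 := by linarith
    have := pow_eq_zero_iff two_ne_zero |>.1 <| (mul_eq_zero.1 this).resolve_left (by positivity)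
    linarith
  have hz' : z' = ω := by
    have : 2 * l * m ^ 3 * (z' - ω) ^ 2 = 0 := by linarith
    have := pow_eq_zero_iff two_ne_zero |>.1 <| (mul_eq_zero.1 this).resolve_left (by positivity)
    linarith
  have hre : (⟪a, b⟫_ℂ).re + ω ^ 2 = r ^ 2 := by
    have : 2 * l * m * (r ^ 2 - (⟪a, b⟫_ℂ).re - ω ^ 2) = 0 := by linarith
    have := (mul_eq_zero.1 this).resolve_left (by positivity)
    linarith
  have hω := eq_zero_of_sq_add_sq_le_of_add_sq_eq hr hcs hre
  rw [hω] at hz hz' hre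
  subst hz hz'
  refine ⟨?_, rfl, rfl⟩
  have : ‖a - b‖ ^ 2 = 0 := by
    rw [norm_sub_sq (𝕜 := ℂ), RCLike.re_to_complex]
    linarith
  exact sub_eq_zero.1 (norm_eq_zero.1 (pow_eq_zero_iff two_ne_zero |>.1 this))

end Core

end InnerProductSpace

section HebischSikoraRoot

/-- The positive root `T` of `r² T⁴ = A T² + z²`. -/
def hsRoot (r A z : ℝ) : ℝ := √((A + √(A ^ 2 + 4 * r ^ 2 * z ^ 2)) / (2 * r ^ 2))

variable {r A z : ℝ}

theorem hsRoot_nonneg : 0 ≤ hsRoot r A z := Real.sqrt_nonneg _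

theorem hsRoot_neg : hsRoot r A (-z) = hsRoot r A z := by
  simp only [hsRoot, neg_sq]

theorem hsRoot_sq_mul {c : ℝ} (hc : 0 ≤ c) :
    hsRoot r (c ^ 2 * A) (c ^ 2 * z) = c * hsRoot r A z := by
  have hS : √((c ^ 2 * A) ^ 2 + 4 * r ^ 2 * (c ^ 2 * z) ^ 2) =
      c ^ 2 * √(A ^ 2 + 4 * r ^ 2 * z ^ 2) := by
    rw [show (c ^ 2 * A) ^ 2 + 4 * r ^ 2 * (c ^ 2 * z) ^ 2 =
        (c ^ 2) ^ 2 * (A ^ 2 + 4 * r ^ 2 * z ^ 2) by ring,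
      Real.sqrt_mul (by positivity), Real.sqrt_sq (by positivity)]
  rw [hsRoot, hsRoot, hS, ← mul_add, mul_div_assoc, Real.sqrt_mul (by positivity),
    Real.sqrt_sq hc]

variable (hr : 0 < r) (hA : 0 ≤ A)
include hr hA

theorem hsRoot_sq : hsRoot r A z ^ 2 = (A + √(A ^ 2 + 4 * r ^ 2 * z ^ 2)) / (2 * r ^ 2) :=
  Real.sq_sqrt (by positivity)

theorem hsRoot_pow_four : r ^ 2 * hsRoot r A z ^ 4 = A * hsRoot r A z ^ 2 + z ^ 2 := by
  have hS := Real.sq_sqrt (by positivity : 0 ≤ A ^ 2 + 4 * r ^ 2 * z ^ 2)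
  rw [show hsRoot r A z ^ 4 = (hsRoot r A z ^ 2) ^ 2 by ring, hsRoot_sq hr hA]
  generalize √(A ^ 2 + 4 * r ^ 2 * z ^ 2) = S at hS ⊢
  field_simp
  linear_combination hS

theorem le_sq_mul_hsRoot_sq : A ≤ r ^ 2 * hsRoot r A z ^ 2 := by
  have : A ≤ √(A ^ 2 + 4 * r ^ 2 * z ^ 2) :=
    Real.le_sqrt_of_sq_le (by nlinarith [sq_nonneg (r * z)])
  rw [hsRoot_sq hr hA, mul_div_assoc', le_div_iff₀ (by positivity)]
  nlinarith

/-- The polynomial `r² t⁴ - A t² - z²` has the sign of `t - hsRoot r A z` for `t > 0`. -/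
theorem sq_mul_pow_four_sub_eq (t : ℝ) : r ^ 2 * t ^ 4 - (A * t ^ 2 + z ^ 2) =
    (t ^ 2 - hsRoot r A z ^ 2) * (r ^ 2 * (t ^ 2 + hsRoot r A z ^ 2) - A) := by
  linear_combination hsRoot_pow_four hr hA (z := z)

theorem lt_sq_mul_add_hsRoot_sq {t : ℝ} (ht : 0 < t) :
    A < r ^ 2 * (t ^ 2 + hsRoot r A z ^ 2) := by
  nlinarith [le_sq_mul_hsRoot_sq hr hA (z := z), mul_pos (pow_pos hr 2) (pow_pos ht 2)]

theorem hsRoot_lt_iff {t : ℝ} (ht : 0 < t) :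
    hsRoot r A z < t ↔ A * t ^ 2 + z ^ 2 < r ^ 2 * t ^ 4 := by
  have hpos := sub_pos.2 (lt_sq_mul_add_hsRoot_sq hr hA (z := z) ht)
  rw [← sub_pos (b := A * t ^ 2 + z ^ 2), sq_mul_pow_four_sub_eq hr hA,
    mul_pos_iff_of_pos_right hpos, sub_pos, pow_lt_pow_iff_left₀ hsRoot_nonneg ht.le two_ne_zero]

theorem hsRoot_le_iff {t : ℝ} (ht : 0 < t) :
    hsRoot r A z ≤ t ↔ A * t ^ 2 + z ^ 2 ≤ r ^ 2 * t ^ 4 := by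
  have hpos := sub_pos.2 (lt_sq_mul_add_hsRoot_sq hr hA (z := z) ht)
  rw [← sub_nonneg (b := A * t ^ 2 + z ^ 2), sq_mul_pow_four_sub_eq hr hA,
    mul_nonneg_iff_of_pos_right hpos, sub_nonneg,
    pow_le_pow_iff_left₀ hsRoot_nonneg ht.le two_ne_zero]

theorem hsRoot_eq_zero_iff : hsRoot r A z = 0 ↔ A = 0 ∧ z = 0 := by
  constructor
  · intro h
    have h4 := hsRoot_pow_four hr hA (z := z)
    have h2 := le_sq_mul_hsRoot_sq hr hA (z := z)
    rw [h] at h4 h2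
    exact ⟨by linarith, by simpa using h4.symm⟩
  · rintro ⟨rfl, rfl⟩
    simp [hsRoot]

end HebischSikoraRoot

section Heisenberg

variable {n : ℕ}

def horiz (q : Heis n) : EuclideanSpace ℂ (Fin n) := WithLp.toLp 2 fun i => ⟨q.1 i, q.2.1 i⟩

theorem horiz_hMul (p q : Heis n) : horiz (hMul p q) = horiz p + horiz q := by
  ext i
  apply Complex.ext <;> simp [horiz, hMul]

theorem horiz_hDil (c : ℝ) (q : Heis n) : horiz (hDil c q) = c • horiz q := by
  ext i
  apply Complex.ext <;> simp [horiz, hDil]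

theorem horiz_hInv (q : Heis n) : horiz (hInv q) = -horiz q := by
  ext i
  apply Complex.ext <;> simp [horiz, hInv]

theorem hMul_snd_snd (p q : Heis n) :
    (hMul p q).2.2 = p.2.2 + q.2.2 + 2 * (⟪horiz q, horiz p⟫_ℂ).im := by
  simp [hMul, horiz, PiLp.inner_apply, Complex.mul_im]
  rw [← Finset.sum_sub_distrib]
  exact Finset.sum_congr rfl fun i _ => by ring

theorem norm_horiz_sq (q : Heis n) : ‖horiz q‖ ^ 2 = ∑ i, (q.1 i ^ 2 + q.2.1 i ^ 2) := by
  rw [EuclideanSpace.norm_sq_eq]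
  refine Finset.sum_congr rfl fun i _ => ?_
  rw [Complex.sq_norm, Complex.normSq_apply]
  simp [horiz, sq]

theorem eNormH_nonneg (q : Heis n) : 0 ≤ eNormH q := Real.sqrt_nonneg _

theorem eNormH_sq (q : Heis n) : eNormH q ^ 2 = ‖horiz q‖ ^ 2 + q.2.2 ^ 2 := by
  rw [eNormH, Real.sq_sqrt (by positivity), norm_horiz_sq, Finset.sum_add_distrib]

theorem eNormH_hDil_one_div_sq_mul {t : ℝ} (ht : t ≠ 0) (q : Heis n) :
    eNormH (hDil (1 / t) q) ^ 2 * t ^ 4 = ‖horiz q‖ ^ 2 * t ^ 2 + q.2.2 ^ 2 := by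
  rw [eNormH_sq, horiz_hDil, norm_smul, Real.norm_eq_abs, mul_pow, sq_abs]
  simp only [hDil]
  field_simp

theorem eq_of_horiz_eq {p q : Heis n} (h : horiz p = horiz q) (hz : p.2.2 = q.2.2) : p = q := by
  have h i : (⟨p.1 i, p.2.1 i⟩ : ℂ) = ⟨q.1 i, q.2.1 i⟩ := congr_fun (congr_arg WithLp.ofLp h) i
  exact Prod.ext (funext fun i => congr_arg Complex.re (h i))
    (Prod.ext (funext fun i => congr_arg Complex.im (h i)) hz)

theorem horiz_zero : horiz (0 : Heis n) = 0 := by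
  ext i
  simp [horiz, Complex.ext_iff]

theorem eq_zero_iff_horiz (q : Heis n) : q = 0 ↔ horiz q = 0 ∧ q.2.2 = 0 :=
  ⟨by rintro rfl; exact ⟨horiz_zero, rfl⟩,
    fun ⟨hh, hz⟩ => eq_of_horiz_eq (hh.trans horiz_zero.symm) hz⟩

theorem hDil_hMul (c : ℝ) (p q : Heis n) : hDil c (hMul p q) = hMul (hDil c p) (hDil c q) := by
  simp only [hDil, hMul, smul_add, Pi.smul_apply, smul_eq_mul, Prod.mk.injEq, true_and]
  simp only [mul_add, Finset.mul_sum]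
  congr 1
  exact Finset.sum_congr rfl fun i _ => by ring

theorem hDil_hDil (c d : ℝ) (q : Heis n) : hDil c (hDil d q) = hDil (c * d) q := by
  simp only [hDil, smul_smul, mul_pow, mul_assoc]

theorem hDil_of_snd_snd_eq_zero {w : Heis n} (hw : w.2.2 = 0) (c : ℝ) :
    hDil c w = (c • w.1, c • w.2.1, 0) := by
  simp [hDil, hw]

theorem hMul_hDil_hDil_of_snd_snd_eq_zero {w : Heis n} (hw : w.2.2 = 0) (s t : ℝ) :
    hMul (hDil s w) (hDil t w) = hDil (s + t) w := by
  simp only [hDil, hMul, hw, add_smul, Pi.smul_apply, smul_eq_mul, mul_zero, Prod.mk.injEq,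
    true_and]
  simp [mul_mul_mul_comm, mul_comm]

theorem hDil_one (q : Heis n) : hDil 1 q = q := by
  simp [hDil]

theorem hMul_zero (p : Heis n) : hMul p 0 = p := by
  simp [hMul]

theorem zero_hMul (q : Heis n) : hMul 0 q = q := by
  simp [hMul]

theorem hDil_one_div_add_hMul {s t : ℝ} (hs : s ≠ 0) (ht : t ≠ 0) (hst : s + t ≠ 0)
    (p q : Heis n) : hDil (1 / (s + t)) (hMul p q) =
      hMul (hDil (s / (s + t)) (hDil (1 / s) p)) (hDil (t / (s + t)) (hDil (1 / t) q)) := by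
  rw [hDil_hMul, hDil_hDil, hDil_hDil]
  congr 2 <;> field_simp

theorem eNormH_hMul_hDil_sq (l m : ℝ) (p q : Heis n) :
    eNormH (hMul (hDil l p) (hDil m q)) ^ 2 = ‖l • horiz p + m • horiz q‖ ^ 2 +
      (l ^ 2 * p.2.2 + m ^ 2 * q.2.2 + 2 * l * m * (⟪horiz q, horiz p⟫_ℂ).im) ^ 2 := by
  have him : (⟪m • horiz q, l • horiz p⟫_ℂ).im = l * m * (⟪horiz q, horiz p⟫_ℂ).im := by
    simp
    ring
  rw [eNormH_sq, horiz_hMul, horiz_hDil, horiz_hDil, hMul_snd_snd, horiz_hDil, horiz_hDil, him]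
  simp only [hDil]
  ring

section Core

variable {r l m : ℝ} {p q : Heis n}

theorem eNormH_hMul_hDil_le (hr : 2 * r ^ 2 ≤ 1) (hp : eNormH p = r) (hq : eNormH q = r)
    (hl : 0 ≤ l) (hm : 0 ≤ m) (hlm : l + m = 1) : eNormH (hMul (hDil l p) (hDil m q)) ≤ r := by
  rw [← pow_le_pow_iff_left₀ (eNormH_nonneg _) (hp ▸ eNormH_nonneg p) two_ne_zero,
    eNormH_hMul_hDil_sq]
  exact norm_smul_add_smul_sq_add_sq_le hr (by rw [← eNormH_sq, hp]) (by rw [← eNormH_sq, hq])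
    hl hm hlm

theorem eq_of_eNormH_hMul_hDil_eq (hr : 2 * r ^ 2 < 1) (hp : eNormH p = r) (hq : eNormH q = r)
    (hl : 0 < l) (hm : 0 < m) (hlm : l + m = 1) (h : eNormH (hMul (hDil l p) (hDil m q)) = r) :
    p = q ∧ p.2.2 = 0 := by
  rw [← sq_eq_sq₀ (eNormH_nonneg _) (hp ▸ eNormH_nonneg p), eNormH_hMul_hDil_sq] at h
  obtain ⟨hh, hzp, hzq⟩ := eq_of_norm_smul_add_smul_sq_add_sq_eq hr
    (by rw [← eNormH_sq, hp]) (by rw [← eNormH_sq, hq]) hl hm hlm h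
  exact ⟨eq_of_horiz_eq hh (hzp.trans hzq.symm), hzp⟩

end Core

end Heisenberg

section HebischSikora

variable {n : ℕ} {r : ℝ} (hr : 0 < r)
include hr

theorem eNormH_hDil_one_div_lt_iff {t : ℝ} (ht : 0 < t) (q : Heis n) :
    eNormH (hDil (1 / t) q) < r ↔ ‖horiz q‖ ^ 2 * t ^ 2 + q.2.2 ^ 2 < r ^ 2 * t ^ 4 := by
  rw [← pow_lt_pow_iff_left₀ (eNormH_nonneg _) hr.le two_ne_zero,
    ← mul_lt_mul_iff_of_pos_right (pow_pos ht 4), eNormH_hDil_one_div_sq_mul ht.ne']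

theorem eNormH_hDil_one_div_le_iff {t : ℝ} (ht : 0 < t) (q : Heis n) :
    eNormH (hDil (1 / t) q) ≤ r ↔ ‖horiz q‖ ^ 2 * t ^ 2 + q.2.2 ^ 2 ≤ r ^ 2 * t ^ 4 := by
  rw [← pow_le_pow_iff_left₀ (eNormH_nonneg _) hr.le two_ne_zero,
    ← mul_le_mul_iff_of_pos_right (pow_pos ht 4), eNormH_hDil_one_div_sq_mul ht.ne']

theorem NHS_eq_hsRoot (q : Heis n) : NHS r q = hsRoot r (‖horiz q‖ ^ 2) q.2.2 := by
  have hA := sq_nonneg ‖horiz q‖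
  have : {t : ℝ | 0 < t ∧ eNormH (hDil (1 / t) q) < r} = Ioi (hsRoot r (‖horiz q‖ ^ 2) q.2.2) := by
    ext t
    refine ⟨fun ⟨ht, h⟩ => (hsRoot_lt_iff hr hA ht).2 ((eNormH_hDil_one_div_lt_iff hr ht q).1 h),
      fun h => ?_⟩
    have ht := hsRoot_nonneg.trans_lt h
    exact ⟨ht, (eNormH_hDil_one_div_lt_iff hr ht q).2 ((hsRoot_lt_iff hr hA ht).1 h)⟩
  rw [NHS, this, csInf_Ioi]

omit hr in
theorem NHS_nonneg (q : Heis n) : 0 ≤ NHS r q :=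
  Real.sInf_nonneg fun _ ht => ht.1.le

theorem NHS_eq_zero_iff {q : Heis n} : NHS r q = 0 ↔ q = 0 := by
  rw [NHS_eq_hsRoot hr, hsRoot_eq_zero_iff hr (sq_nonneg _), eq_zero_iff_horiz, sq_eq_zero_iff,
    norm_eq_zero]

theorem NHS_pos {q : Heis n} (hq : q ≠ 0) : 0 < NHS r q :=
  (NHS_nonneg q).lt_of_ne' ((NHS_eq_zero_iff hr).not.2 hq)

theorem NHS_hInv (q : Heis n) : NHS r (hInv q) = NHS r q := by
  rw [NHS_eq_hsRoot hr, NHS_eq_hsRoot hr, horiz_hInv, norm_neg,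
    show (hInv q).2.2 = -q.2.2 from rfl, hsRoot_neg]

theorem NHS_hDil {c : ℝ} (hc : 0 < c) (q : Heis n) : NHS r (hDil c q) = c * NHS r q := by
  rw [NHS_eq_hsRoot hr, NHS_eq_hsRoot hr, horiz_hDil, norm_smul, mul_pow, Real.norm_eq_abs, sq_abs,
    show (hDil c q).2.2 = c ^ 2 * q.2.2 from rfl, hsRoot_sq_mul hc.le]

theorem NHS_le_iff {t : ℝ} (ht : 0 < t) (q : Heis n) :
    NHS r q ≤ t ↔ eNormH (hDil (1 / t) q) ≤ r := by
  rw [NHS_eq_hsRoot hr, hsRoot_le_iff hr (sq_nonneg _) ht, eNormH_hDil_one_div_le_iff hr ht]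

theorem eNormH_hDil_one_div_NHS {q : Heis n} (hq : q ≠ 0) :
    eNormH (hDil (1 / NHS r q) q) = r := by
  have hT := NHS_pos hr hq
  have h := eNormH_hDil_one_div_sq_mul hT.ne' q
  have h4 := hsRoot_pow_four hr (sq_nonneg ‖horiz q‖) (z := q.2.2)
  rw [← NHS_eq_hsRoot hr] at h4
  rw [← sq_eq_sq₀ (eNormH_nonneg _) hr.le]
  exact mul_right_cancel₀ (pow_pos hT 4).ne' (by linarith)

theorem NHS_hMul_le (h2r : 2 * r ^ 2 ≤ 1) (p q : Heis n) :
    NHS r (hMul p q) ≤ NHS r p + NHS r q := by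
  rcases eq_or_ne p 0 with rfl | hp
  · rw [zero_hMul, (NHS_eq_zero_iff hr).2 rfl, zero_add]
  rcases eq_or_ne q 0 with rfl | hq
  · rw [hMul_zero, (NHS_eq_zero_iff hr).2 rfl, add_zero]
  have hs := NHS_pos hr hp
  have ht := NHS_pos hr hq
  rw [NHS_le_iff hr (add_pos hs ht), hDil_one_div_add_hMul hs.ne' ht.ne' (add_pos hs ht).ne']
  exact eNormH_hMul_hDil_le h2r (eNormH_hDil_one_div_NHS hr hp) (eNormH_hDil_one_div_NHS hr hq)
    (by positivity) (by positivity) (by field_simp)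

theorem exists_eq_hDil_of_NHS_hMul_eq (h2r : 2 * r ^ 2 < 1) {p q : Heis n} (hp : p ≠ 0)
    (hq : q ≠ 0) (h : NHS r (hMul p q) = NHS r p + NHS r q) :
    ∃ w : Heis n, w.2.2 = 0 ∧ p = hDil (NHS r p) w ∧ q = hDil (NHS r q) w := by
  have hs := NHS_pos hr hp
  have ht := NHS_pos hr hq
  have hpq : hMul p q ≠ 0 := fun h0 => by
    rw [h0, (NHS_eq_zero_iff hr).2 rfl] at h
    linarith
  have hsphere := eNormH_hDil_one_div_NHS hr hpq
  rw [h, hDil_one_div_add_hMul hs.ne' ht.ne' (add_pos hs ht).ne'] at hsphere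
  obtain ⟨hpq', hz⟩ := eq_of_eNormH_hMul_hDil_eq h2r (eNormH_hDil_one_div_NHS hr hp)
    (eNormH_hDil_one_div_NHS hr hq) (by positivity) (by positivity) (by field_simp) hsphere
  refine ⟨hDil (1 / NHS r p) p, hz, ?_, ?_⟩
  · rw [hDil_hDil, mul_one_div_cancel hs.ne', hDil_one]
  · rw [hpq', hDil_hDil, mul_one_div_cancel ht.ne', hDil_one]

theorem NHS_hMul_hDil_hDil {w : Heis n} (hw : w.2.2 = 0) {s t : ℝ} (hs : 0 < s) (ht : 0 < t) :
    NHS r (hMul (hDil s w) (hDil t w)) = NHS r (hDil s w) + NHS r (hDil t w) := by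
  rw [hMul_hDil_hDil_of_snd_snd_eq_zero hw, NHS_hDil hr (add_pos hs ht), NHS_hDil hr hs,
    NHS_hDil hr ht, add_mul]

theorem NHS_hMul_eq_add_iff (h2r : 2 * r ^ 2 < 1) {p q : Heis n} (hp : p ≠ 0) (hq : q ≠ 0) :
    NHS r (hMul p q) = NHS r p + NHS r q ↔
      ∃ (w : (Fin n → ℝ) × (Fin n → ℝ)) (s₁ s₂ : ℝ), 0 < s₁ ∧ 0 < s₂ ∧
        p = (s₁ • w.1, s₁ • w.2, 0) ∧ q = (s₂ • w.1, s₂ • w.2, 0) := by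
  constructor
  · intro h
    obtain ⟨w, hw, hpw, hqw⟩ := exists_eq_hDil_of_NHS_hMul_eq hr h2r hp hq h
    exact ⟨(w.1, w.2.1), _, _, NHS_pos hr hp, NHS_pos hr hq,
      hpw.trans (hDil_of_snd_snd_eq_zero hw _), hqw.trans (hDil_of_snd_snd_eq_zero hw _)⟩
  · rintro ⟨w, s₁, s₂, hs₁, hs₂, rfl, rfl⟩
    have hw : ((w.1, w.2, 0) : Heis n).2.2 = 0 := rfl
    simpa only [hDil_of_snd_snd_eq_zero hw] using NHS_hMul_hDil_hDil hr hw hs₁ hs₂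

end HebischSikora

theorem stmt13 (n : ℕ) :
    ∃ r₀ : ℝ, 0 < r₀ ∧ ∀ r : ℝ, 0 < r → r < r₀ →
      IsHomNorm (fun q : Heis n => NHS r q) ∧
      IsHSC (fun q : Heis n => NHS r q) ∧
      ∀ q₁ q₂ : Heis n, q₁ ≠ 0 → q₂ ≠ 0 →
        (NHS r (hMul q₁ q₂) = NHS r q₁ + NHS r q₂ ↔
          ∃ (w : (Fin n → ℝ) × (Fin n → ℝ)) (s₁ s₂ : ℝ), 0 < s₁ ∧ 0 < s₂ ∧
            q₁ = (s₁ • w.1, s₁ • w.2, 0) ∧ q₂ = (s₂ • w.1, s₂ • w.2, 0)) := by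
  refine ⟨√(1 / 2), by positivity, fun r hr hr₀ => ?_⟩
  have h2r : 2 * r ^ 2 < 1 := by
    have := (Real.lt_sqrt hr.le).1 hr₀
    linarith
  have heq_iff := fun (q₁ q₂ : Heis n) (h₁ : q₁ ≠ 0) (h₂ : q₂ ≠ 0) =>
    NHS_hMul_eq_add_iff hr h2r h₁ h₂
  refine ⟨⟨NHS_nonneg, fun _ => NHS_eq_zero_iff hr, NHS_hInv hr, NHS_hMul_le hr h2r.le,
    fun _ hc => NHS_hDil hr hc⟩, fun q q' hq hq' h => ?_, heq_iff⟩
  obtain ⟨w, s, s', -, -, hqw, hq'w⟩ := (heq_iff q q' hq hq').1 h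
  exact ⟨w, s, s', hqw, hq'w⟩
end
end

section
/- Fix n ∈ ℕ, 1 ≤ p ≤ ∞ and 0 < a ≤ n^{−1/2}, and define N_{p,a}: ℍⁿ → [0,∞) by N_{p,a}(x,y,z) = max{ ‖(x,y)‖_p , a·√|z| }, where ‖·‖_p is the ℓ^p norm on ℝ^{2n}. Then N_{p,a} is not horizontally strictly convex: for any z with 0 < |z| ≤ 1/a², the points q = (e₁, 0, z) and q' = (e₁, 0, −z) (e₁ the first standard basis vector of ℝⁿ) satisfy N_{p,a}(q·q') = 2 = N_{p,a}(q) + N_{p,a}(q'), yet there exist no w ∈ ℝ^{2n} and s, s' ∈ ℝ with q = ((s w), 0) and q' = ((s' w), 0). -/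
open MeasureTheory Set
open scoped ENNReal

noncomputable section

/-- The `ℓᵖ` norm of `(x,y) ∈ ℝ^{2n}`, `1 ≤ p ≤ ∞`. -/
noncomputable def lp2n (n : ℕ) (p : ℝ≥0∞) [Fact (1 ≤ p)] (x y : Fin n → ℝ) : ℝ :=
  ‖(WithLp.equiv p (Fin n ⊕ Fin n → ℝ)).symm (Sum.elim x y)‖

/-- The norm `N_{p,a}(x,y,z) = max (‖(x,y)‖_p, a √|z|)` on `ℍⁿ`. -/
noncomputable def Npa (n : ℕ) (p : ℝ≥0∞) [Fact (1 ≤ p)] (a : ℝ)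
    (q : Heis n) : ℝ :=
  max (lp2n n p q.1 q.2.1) (a * Real.sqrt |q.2.2|)

/-! The symplectic term of the group law vanishes on points with zero `y`-part, so
`(e₁, 0, z)·(e₁, 0, -z) = (2e₁, 0, 0)` has norm `2`, while each factor has norm `1` because
`a √|z| ≤ 1`. The factors are not horizontal, since their vertical coordinate `±z` is nonzero. -/

section

variable {n : ℕ}

lemma sum_elim_single_zero (i : Fin n) (c : ℝ) :
    Sum.elim (Pi.single i c) (0 : Fin n → ℝ) = Pi.single (Sum.inl i) c := by
  funext j
  rcases j with j | j
  · rcases eq_or_ne j i with rfl | hj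
    · simp
    · simp [hj]
  · simp

lemma ite_val_eq_zero_eq_single (hn : 0 < n) (c : ℝ) :
    (fun i : Fin n => if (i : ℕ) = 0 then c else 0) = Pi.single ⟨0, hn⟩ c := by
  funext i
  simp [Pi.single_apply, Fin.ext_iff]

lemma hMul_snd_zero (x x' : Fin n → ℝ) (z z' : ℝ) :
    hMul (x, 0, z) (x', 0, z') = (x + x', 0, z + z') := by
  simp [hMul]

variable (p : ℝ≥0∞) [Fact (1 ≤ p)]

lemma lp2n_single_zero (i : Fin n) (c : ℝ) : lp2n n p (Pi.single i c) 0 = |c| := by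
  rw [lp2n, sum_elim_single_zero]
  change ‖PiLp.single p (β := fun _ : Fin n ⊕ Fin n => ℝ) _ c‖ = _
  rw [PiLp.norm_single, Real.norm_eq_abs]

lemma Npa_single_zero (a : ℝ) (i : Fin n) (c z : ℝ) :
    Npa n p a (Pi.single i c, 0, z) = max |c| (a * Real.sqrt |z|) := by
  rw [Npa, lp2n_single_zero]

end

lemma mul_sqrt_le_one {a t : ℝ} (ha : 0 < a) (ht : t ≤ 1 / a ^ 2) : a * Real.sqrt t ≤ 1 := by
  calc a * Real.sqrt t ≤ a * Real.sqrt (1 / a ^ 2) := by gcongr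
    _ = 1 := by rw [Real.sqrt_div' _ (sq_nonneg a), Real.sqrt_sq ha.le, Real.sqrt_one]; field_simp

theorem stmt14 (n : ℕ) (p : ℝ≥0∞) [Fact (1 ≤ p)] (a : ℝ)
    (ha : 0 < a) (ha' : a ≤ (n : ℝ) ^ (-(1 : ℝ) / 2)) :
    ∀ z : ℝ, 0 < |z| → |z| ≤ 1 / a ^ 2 →
      Npa n p a
          (hMul ((fun i => if (i : ℕ) = 0 then (1 : ℝ) else 0), 0, z)
                ((fun i => if (i : ℕ) = 0 then (1 : ℝ) else 0), 0, -z)) = 2 ∧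
      Npa n p a ((fun i => if (i : ℕ) = 0 then (1 : ℝ) else 0), 0, z)
        + Npa n p a ((fun i => if (i : ℕ) = 0 then (1 : ℝ) else 0), 0, -z) = 2 ∧
      ¬ ∃ (w : (Fin n → ℝ) × (Fin n → ℝ)) (s s' : ℝ),
          (((fun i => if (i : ℕ) = 0 then (1 : ℝ) else 0), 0, z) : Heis n)
              = (s • w.1, s • w.2, 0) ∧
          (((fun i => if (i : ℕ) = 0 then (1 : ℝ) else 0), 0, -z) : Heis n)
              = (s' • w.1, s' • w.2, 0) := by
  have hn : 0 < n := by
    refine Nat.pos_of_ne_zero fun hn => ?_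
    rw [hn, Nat.cast_zero, Real.zero_rpow (by norm_num)] at ha'
    exact ha.not_ge ha'
  intro z hz hz_le
  have hsqrt : a * Real.sqrt |z| ≤ 1 := mul_sqrt_le_one ha hz_le
  rw [ite_val_eq_zero_eq_single hn, hMul_snd_zero, ← Pi.single_add, add_neg_cancel]
  refine ⟨?_, ?_, ?_⟩
  · rw [Npa_single_zero]
    norm_num
  · rw [Npa_single_zero, Npa_single_zero, abs_neg, abs_one, max_eq_left hsqrt]
    norm_num
  · rintro ⟨w, s, s', hq, -⟩
    have hz0 : z = 0 := congrArg (·.2.2) hq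
    simp [hz0] at hz
end
end

section
/- Let V and W be real inner product spaces, let t ∈ (0,1), C₁ > 0, and let x₁, x₂ ∈ V be nonzero vectors. Let v ∈ W satisfy ‖v‖ ≤ C₁·‖x₁‖·‖x₂‖·‖ x₁/‖x₁‖ − x₂/‖x₂‖ ‖, and assume (1 + t(1−t))·C₁²·‖x₁‖·‖x₂‖ ≤ 1. Then ‖t·x₁ + (1−t)·x₂‖² + t(1−t)(1 + t(1−t))·‖v‖² ≤ (t‖x₁‖ + (1−t)‖x₂‖)². -/
/-!
Expanding the square, `(t‖x₁‖ + (1-t)‖x₂‖)² - ‖t x₁ + (1-t) x₂‖²` equals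
`2t(1-t)(‖x₁‖‖x₂‖ - ⟪x₁, x₂⟫)`, and the same Cauchy–Schwarz gap, multiplied by `‖x₁‖‖x₂‖`,
is half of `(‖x₁‖‖x₂‖)² ‖x₁/‖x₁‖ - x₂/‖x₂‖‖²`. So the hypothesis on `v` bounds `‖v‖²` by
`2C₁²‖x₁‖‖x₂‖` times the gap, and the smallness assumption absorbs the factor `(1 + t(1-t))`.
-/

open scoped RealInnerProductSpace

section InnerProductSpace

variable {V : Type*} [NormedAddCommGroup V] [InnerProductSpace ℝ V]

theorem sq_add_norm_sub_norm_smul_add_smul_sq (a b : ℝ) (x y : V) :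
    (a * ‖x‖ + b * ‖y‖) ^ 2 - ‖a • x + b • y‖ ^ 2 = 2 * a * b * (‖x‖ * ‖y‖ - ⟪x, y⟫) := by
  rw [norm_add_sq_real, norm_smul, norm_smul, real_inner_smul_left, real_inner_smul_right,
    mul_pow, mul_pow, Real.norm_eq_abs, Real.norm_eq_abs, sq_abs, sq_abs]
  ring

/-- Also true when `x` or `y` vanishes, since then `‖0‖⁻¹ = 0` makes both sides zero. -/
theorem norm_mul_norm_mul_norm_inv_smul_sub_inv_smul_sq (x y : V) :
    ‖x‖ * ‖y‖ * ‖‖x‖⁻¹ • x - ‖y‖⁻¹ • y‖ ^ 2 = 2 * (‖x‖ * ‖y‖ - ⟪x, y⟫) := by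
  rcases eq_or_ne x 0 with rfl | hx
  · simp
  rcases eq_or_ne y 0 with rfl | hy
  · simp
  have hx' : ‖x‖ ≠ 0 := norm_ne_zero_iff.mpr hx
  have hy' : ‖y‖ ≠ 0 := norm_ne_zero_iff.mpr hy
  rw [norm_sub_sq_real, norm_smul, norm_smul, real_inner_smul_left, real_inner_smul_right,
    norm_inv, norm_norm, norm_inv, norm_norm]
  field_simp
  ring

theorem norm_sq_le_of_norm_le_mul_norm_inv_smul_sub_inv_smul {W : Type*}
    [NormedAddCommGroup W] {C : ℝ} {x y : V} {v : W}
    (hv : ‖v‖ ≤ C * ‖x‖ * ‖y‖ * ‖‖x‖⁻¹ • x - ‖y‖⁻¹ • y‖) :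
    ‖v‖ ^ 2 ≤ 2 * C ^ 2 * ‖x‖ * ‖y‖ * (‖x‖ * ‖y‖ - ⟪x, y⟫) := by
  calc ‖v‖ ^ 2 ≤ (C * ‖x‖ * ‖y‖ * ‖‖x‖⁻¹ • x - ‖y‖⁻¹ • y‖) ^ 2 :=
        pow_le_pow_left₀ (norm_nonneg v) hv 2
    _ = C ^ 2 * ‖x‖ * ‖y‖ * (‖x‖ * ‖y‖ * ‖‖x‖⁻¹ • x - ‖y‖⁻¹ • y‖ ^ 2) := by ring
    _ = 2 * C ^ 2 * ‖x‖ * ‖y‖ * (‖x‖ * ‖y‖ - ⟪x, y⟫) := by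
        rw [norm_mul_norm_mul_norm_inv_smul_sub_inv_smul_sq]; ring

end InnerProductSpace

theorem stmt17_general {V W : Type*} [NormedAddCommGroup V] [InnerProductSpace ℝ V]
    [NormedAddCommGroup W]
    (t C₁ : ℝ) (ht : t ∈ Set.Ioo (0 : ℝ) 1)
    (x₁ x₂ : V) (v : W)
    (hv : ‖v‖ ≤ C₁ * ‖x₁‖ * ‖x₂‖ * ‖‖x₁‖⁻¹ • x₁ - ‖x₂‖⁻¹ • x₂‖)
    (hsmall : (1 + t * (1 - t)) * C₁ ^ 2 * ‖x₁‖ * ‖x₂‖ ≤ 1) :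
    ‖t • x₁ + (1 - t) • x₂‖ ^ 2 + t * (1 - t) * (1 + t * (1 - t)) * ‖v‖ ^ 2
      ≤ (t * ‖x₁‖ + (1 - t) * ‖x₂‖) ^ 2 := by
  set s := t * (1 - t)
  set gap := ‖x₁‖ * ‖x₂‖ - ⟪x₁, x₂⟫
  have hs : 0 ≤ s := mul_nonneg ht.1.le (sub_nonneg.mpr ht.2.le)
  have hgap : 0 ≤ gap := sub_nonneg.mpr (real_inner_le_norm x₁ x₂)
  have hexpand := sq_add_norm_sub_norm_smul_add_smul_sq t (1 - t) x₁ x₂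
  have hvsq := norm_sq_le_of_norm_le_mul_norm_inv_smul_sub_inv_smul hv
  have hvgap : s * (1 + s) * ‖v‖ ^ 2 ≤ 2 * s * gap :=
    calc s * (1 + s) * ‖v‖ ^ 2 ≤ s * (1 + s) * (2 * C₁ ^ 2 * ‖x₁‖ * ‖x₂‖ * gap) := by
          gcongr
      _ = 2 * s * gap * ((1 + s) * C₁ ^ 2 * ‖x₁‖ * ‖x₂‖) := by ring
      _ ≤ 2 * s * gap := mul_le_of_le_one_right (by positivity) hsmall
  linarith

theorem stmt17 {V W : Type*} [NormedAddCommGroup V] [InnerProductSpace ℝ V]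
    [NormedAddCommGroup W] [InnerProductSpace ℝ W]
    (t C₁ : ℝ) (ht : t ∈ Set.Ioo (0 : ℝ) 1) (hC₁ : 0 < C₁)
    (x₁ x₂ : V) (hx₁ : x₁ ≠ 0) (hx₂ : x₂ ≠ 0) (v : W)
    (hv : ‖v‖ ≤ C₁ * ‖x₁‖ * ‖x₂‖ * ‖‖x₁‖⁻¹ • x₁ - ‖x₂‖⁻¹ • x₂‖)
    (hsmall : (1 + t * (1 - t)) * C₁ ^ 2 * ‖x₁‖ * ‖x₂‖ ≤ 1) :
    ‖t • x₁ + (1 - t) • x₂‖ ^ 2 + t * (1 - t) * (1 + t * (1 - t)) * ‖v‖ ^ 2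
      ≤ (t * ‖x₁‖ + (1 - t) * ‖x₂‖) ^ 2 :=
  stmt17_general t C₁ ht x₁ x₂ v hv hsmall
end
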